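/- Fix positive integers n, k, T, matrices X ∈ ℝ^{n×T} and W ∈ ℝ^{k×n}. Define L(M, Y) := Tr(−(4/T)·Xᵀ·Wᵀ·Y + (2/T)·Yᵀ·M·Y) + 2·Tr(Wᵀ·W) − Tr(Mᵀ·M) for M ∈ ℝ^{k×k}, Y ∈ ℝ^{k×T}. Let B be a positive semidefinite k×k matrix with B³ = (1/T)·W·X·Xᵀ·Wᵀ. Then sup over M of inf over Y of L(M, Y) equals 2·Tr(Wᵀ·W) − 3·Tr(B²) (equivalently, Tr(−(3/T^{2/3})·(W·X·Xᵀ·Wᵀ)^{2/3} + 2·W·Wᵀ)), with suprema and infima taken in the extended reals. -/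

import Mathlib

/-!
With `A = W X` the hypothesis reads `A Aᵀ = T B³`, so `C = B⁺ A`, with `B⁺` the pseudo-inverse of
`B`, satisfies `B C = A` and `C Cᵀ = T B`. Completing squares in the trace form then gives, with
`v = 2 Tr(WᵀW) − 3 Tr(B²)`,
`L(M, C) = v − Tr((M − B)ᵀ(M − B))` and `L(B, Y) = v + (2/T) Tr((Y − C)ᵀ B (Y − C))`,
so `(B, C)` is a saddle point of `L` with value `v`, which is therefore `sup_M inf_Y L`.
-/

open Matrix Set

lemma Matrix.mul_mul_transpose_mul {l m n R : Type*} [Fintype m] [Fintype n] [CommSemiring R]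
    (Q : Matrix l m R) (A : Matrix m n R) :
    Q * A * (Q * A)ᵀ = Q * (A * Aᵀ) * Qᵀ := by
  rw [transpose_mul]
  simp only [Matrix.mul_assoc]

lemma Matrix.mul_eq_self_of_mul_mul_transpose_eq {m n : Type*} [Fintype m] [DecidableEq m]
    [Fintype n] {E : Matrix m m ℝ} {A : Matrix m n ℝ} (h : E * (A * Aᵀ) = A * Aᵀ) :
    E * A = A := by
  have hresidual : ((1 - E) * A) * ((1 - E) * A)ᴴ = 0 := by
    rw [conjTranspose_eq_transpose_of_trivial, mul_mul_transpose_mul, Matrix.sub_mul,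
      Matrix.one_mul, h, sub_self, Matrix.zero_mul]
  rw [self_mul_conjTranspose_eq_zero, Matrix.sub_mul, Matrix.one_mul, sub_eq_zero] at hresidual
  exact hresidual.symm

lemma Matrix.IsHermitian.cfc_mul_cfc_mul_cfc {𝕜 n : Type*} [RCLike 𝕜] [Fintype n]
    [DecidableEq n] {B : Matrix n n 𝕜} (hB : B.IsHermitian) (f g h : ℝ → ℝ) :
    cfc f B * cfc g B * cfc h B = cfc (fun x => f x * g x * h x) B := by
  have hB' : IsSelfAdjoint B := hB
  have hcont (f : ℝ → ℝ) : ContinuousOn f (spectrum ℝ B) :=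
    B.finite_real_spectrum.continuousOn f
  rw [cfc_mul _ _ B (hcont _) (hcont _), cfc_mul _ _ B (hcont _) (hcont _)]

lemma Matrix.IsHermitian.exists_mul_eq_and_mul_transpose_eq {m n : Type*} [Fintype m]
    [DecidableEq m] [Fintype n] {B : Matrix m m ℝ} (hB : B.IsHermitian) {A : Matrix m n ℝ}
    {c : ℝ} (hA : A * Aᵀ = c • B ^ 3) :
    ∃ C : Matrix m n ℝ, B * C = A ∧ C * Cᵀ = c • B := by
  have hB' : IsSelfAdjoint B := hB
  -- the pseudo-inverse of `B`, since `0⁻¹ = 0` in `ℝ`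
  let P := cfc (·⁻¹ : ℝ → ℝ) B
  have hPt : Pᵀ = P := (cfc_predicate (·⁻¹ : ℝ → ℝ) B : IsSelfAdjoint P)
  have hBPB3 : B * P * B ^ 3 = B ^ 3 := by
    calc B * P * B ^ 3 = cfc (fun x => x) B * P * cfc (· ^ 3) B := by
          rw [cfc_id' ℝ B, cfc_pow_id (R := ℝ) B 3]
      _ = cfc (· ^ 3 : ℝ → ℝ) B := by
          rw [hB.cfc_mul_cfc_mul_cfc]
          congr 1
          funext x
          rcases eq_or_ne x 0 with rfl | hx <;> field_simp
      _ = B ^ 3 := cfc_pow_id (R := ℝ) B 3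
  have hPB3P : P * B ^ 3 * P = B := by
    calc P * B ^ 3 * P = P * cfc (· ^ 3) B * P := by rw [cfc_pow_id (R := ℝ) B 3]
      _ = cfc (fun x => x) B := by
          rw [hB.cfc_mul_cfc_mul_cfc]
          congr 1
          funext x
          rcases eq_or_ne x 0 with rfl | hx <;> field_simp
      _ = B := cfc_id' ℝ B
  have hBPA : B * P * A = A := by
    refine mul_eq_self_of_mul_mul_transpose_eq ?_
    rw [hA, Matrix.mul_smul, hBPB3]
  refine ⟨P * A, by rw [← Matrix.mul_assoc, hBPA], ?_⟩
  rw [mul_mul_transpose_mul, hA, hPt, Matrix.mul_smul, Matrix.smul_mul, hPB3P]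

section

variable {ι κ τ : Type*} [Fintype ι] [Fintype κ] [DecidableEq κ] [Fintype τ]

noncomputable def pspObjective (t : ℝ) (X : Matrix ι τ ℝ) (W : Matrix κ ι ℝ)
    (M : Matrix κ κ ℝ) (Y : Matrix κ τ ℝ) : ℝ :=
  ((-(4 / t)) • (Xᵀ * Wᵀ * Y) + (2 / t) • (Yᵀ * M * Y)).trace + 2 * (Wᵀ * W).trace
    - (Mᵀ * M).trace

variable {t : ℝ} {X : Matrix ι τ ℝ} {W : Matrix κ ι ℝ} {B : Matrix κ κ ℝ} {C : Matrix κ τ ℝ}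

lemma pspObjective_saddle_output_eq (hB : B.IsSymm) (hBC : B * C = W * X)
    (hCC : C * Cᵀ = t • B) (ht : t ≠ 0) (M : Matrix κ κ ℝ) :
    pspObjective t X W M C
      = 2 * (Wᵀ * W).trace - 3 * (B ^ 2).trace - ((M - B)ᵀ * (M - B)).trace := by
  have hXWC : (Xᵀ * Wᵀ * C).trace = t * (B ^ 2).trace := by
    rw [← transpose_mul, ← hBC, transpose_mul, hB.eq, trace_mul_comm, ← Matrix.mul_assoc, hCC,
      Matrix.smul_mul, trace_smul, smul_eq_mul, sq]
  have hCMC : (Cᵀ * M * C).trace = t * (Bᵀ * M).trace := by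
    rw [trace_mul_cycle, hCC, Matrix.smul_mul, trace_smul, smul_eq_mul, hB.eq]
  have hMB : (Mᵀ * B).trace = (Bᵀ * M).trace := by
    rw [← trace_transpose, transpose_mul, transpose_transpose]
  rw [pspObjective, trace_add, trace_smul, trace_smul, smul_eq_mul, smul_eq_mul, hXWC, hCMC,
    transpose_sub, Matrix.sub_mul, Matrix.mul_sub, Matrix.mul_sub, trace_sub, trace_sub,
    trace_sub, hMB, hB.eq, sq]
  field_simp
  ring

lemma pspObjective_saddle_lateral_eq (hB : B.IsSymm) (hBC : B * C = W * X)
    (hCC : C * Cᵀ = t • B) (ht : t ≠ 0) (Y : Matrix κ τ ℝ) :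
    pspObjective t X W B Y
      = 2 * (Wᵀ * W).trace - 3 * (B ^ 2).trace + 2 / t * ((Y - C)ᵀ * B * (Y - C)).trace := by
  have hCB : Cᵀ * B = Xᵀ * Wᵀ := by rw [← hB.eq, ← transpose_mul, hBC, transpose_mul]
  have hYBC : (Yᵀ * B * C).trace = (Xᵀ * Wᵀ * Y).trace := by
    rw [Matrix.mul_assoc, hBC, ← trace_transpose, transpose_mul, transpose_transpose,
      transpose_mul]
  have hCBC : (Cᵀ * B * C).trace = t * (B ^ 2).trace := by
    rw [trace_mul_cycle, hCC, Matrix.smul_mul, trace_smul, smul_eq_mul, sq]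
  rw [pspObjective, trace_add, trace_smul, trace_smul, smul_eq_mul, smul_eq_mul,
    transpose_sub, Matrix.sub_mul, Matrix.sub_mul, Matrix.mul_sub, Matrix.mul_sub, trace_sub,
    trace_sub, trace_sub, hYBC, hCBC, hCB, hB.eq, sq]
  field_simp
  ring

lemma pspObjective_isSaddlePointOn (hB : B.PosSemidef) (hBC : B * C = W * X)
    (hCC : C * Cᵀ = t • B) (ht : 0 < t) :
    IsSaddlePointOn univ univ (fun Y M => (pspObjective t X W M Y : EReal)) C B := by
  have hBs : B.IsSymm := isHermitian_iff_isSymm.mp hB.isHermitian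
  intro Y _ M _
  rw [EReal.coe_le_coe_iff, pspObjective_saddle_output_eq hBs hBC hCC ht.ne',
    pspObjective_saddle_lateral_eq hBs hBC hCC ht.ne']
  have hMB : 0 ≤ ((M - B)ᵀ * (M - B)).trace := by
    simpa using (posSemidef_conjTranspose_mul_self (M - B)).trace_nonneg
  have hYC : 0 ≤ ((Y - C)ᵀ * B * (Y - C)).trace := by
    simpa using (hB.conjTranspose_mul_mul_same (Y - C)).trace_nonneg
  have : 0 ≤ 2 / t * ((Y - C)ᵀ * B * (Y - C)).trace := by positivity
  linarith

end

theorem psp_fractional_objective_general (n k T : ℕ) (hT : 0 < T)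
    (X : Matrix (Fin n) (Fin T) ℝ) (W : Matrix (Fin k) (Fin n) ℝ)
    (B : Matrix (Fin k) (Fin k) ℝ) (hB : B.PosSemidef)
    (hB3 : B ^ 3 = (1 / (T : ℝ)) • (W * X * Xᵀ * Wᵀ)) :
    (⨆ M : Matrix (Fin k) (Fin k) ℝ, ⨅ Y : Matrix (Fin k) (Fin T) ℝ,
        ((((-(4 / (T : ℝ))) • (Xᵀ * Wᵀ * Y) + (2 / (T : ℝ)) • (Yᵀ * M * Y)).trace
            + 2 * (Wᵀ * W).trace - (Mᵀ * M).trace : ℝ) : EReal))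
      = ((2 * (Wᵀ * W).trace - 3 * (B ^ 2).trace : ℝ) : EReal) := by
  have hT' : (0 : ℝ) < T := Nat.cast_pos.mpr hT
  have hWX : W * X * (W * X)ᵀ = (T : ℝ) • B ^ 3 := by
    rw [hB3, smul_smul, mul_one_div_cancel hT'.ne', one_smul, transpose_mul]
    simp only [Matrix.mul_assoc]
  obtain ⟨C, hBC, hCC⟩ := hB.isHermitian.exists_mul_eq_and_mul_transpose_eq hWX
  have hvalue := (isSaddlePointOn_value (mem_univ C) (mem_univ B)
    (pspObjective_isSaddlePointOn hB hBC hCC hT')).2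
  simp only [mem_univ, iSup_pos, iInf_pos] at hvalue
  rwa [pspObjective_saddle_lateral_eq (isHermitian_iff_isSymm.mp hB.isHermitian) hBC hCC
    hT'.ne', sub_self, Matrix.mul_zero, trace_zero, mul_zero, add_zero] at hvalue

/-- Eliminating outputs and lateral weights from the mixed PSP objective
`L(M, Y) = Tr(−(4/T)XᵀWᵀY + (2/T)YᵀMY) + 2 Tr(WᵀW) − Tr(MᵀM)` gives
`sup_M inf_Y L = 2 Tr(WᵀW) − 3 Tr(B²)` in the extended reals, where `B` is
positive semidefinite with `B³ = (1/T) W X Xᵀ Wᵀ`. -/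
theorem psp_fractional_objective (n k T : ℕ) (hn : 0 < n) (hk : 0 < k) (hT : 0 < T)
    (X : Matrix (Fin n) (Fin T) ℝ) (W : Matrix (Fin k) (Fin n) ℝ)
    (B : Matrix (Fin k) (Fin k) ℝ) (hB : B.PosSemidef)
    (hB3 : B ^ 3 = (1 / (T : ℝ)) • (W * X * Xᵀ * Wᵀ)) :
    (⨆ M : Matrix (Fin k) (Fin k) ℝ, ⨅ Y : Matrix (Fin k) (Fin T) ℝ,
        ((((-(4 / (T : ℝ))) • (Xᵀ * Wᵀ * Y) + (2 / (T : ℝ)) • (Yᵀ * M * Y)).trace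
            + 2 * (Wᵀ * W).trace - (Mᵀ * M).trace : ℝ) : EReal))
      = ((2 * (Wᵀ * W).trace - 3 * (B ^ 2).trace : ℝ) : EReal) :=
  psp_fractional_objective_general n k T hT X W B hB hB3
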